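/- Let q be even (characteristic 2) and let C ⊆ Sym_{n,q} be an F_q-linear symmetric code containing Alt_{n,q}. Then the dual q-polymatroid of M[C] equals the q-polymatroid of the dual code C*: that is, for every subspace U ≤ F_q^n, n·dim U − ρ_C(F_q^n) + ρ_C(U^⊥) = ρ_{C*}(U). -/

import Mathlib

open Matrix Module

section Defs

variable {F : Type*} [Field F] {n : ℕ}

/-- The subspace of matrices whose column space is contained in `U`. -/
def colRes (U : Submodule F (Fin n → F)) : Submodule F (Matrix (Fin n) (Fin n) F) where
  carrier := {M | ∀ v : Fin n → F, M.mulVec v ∈ U}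
  add_mem' := by
    intro A B hA hB v
    rw [Matrix.add_mulVec]
    exact U.add_mem (hA v) (hB v)
  zero_mem' := by
    intro v
    rw [Matrix.zero_mulVec]
    exact U.zero_mem
  smul_mem' := by
    intro c A hA v
    rw [Matrix.smul_mulVec]
    exact U.smul_mem c (hA v)

/-- The orthogonal complement of `U` w.r.t. the standard inner product on `F^n`. -/
def perp (U : Submodule F (Fin n → F)) : Submodule F (Fin n → F) where
  carrier := {x | ∀ y ∈ U, ∑ i, x i * y i = 0}
  add_mem' := by
    intro a b ha hb y hy
    simp only [Pi.add_apply, add_mul]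
    rw [Finset.sum_add_distrib, ha y hy, hb y hy, add_zero]
  zero_mem' := by
    intro y hy
    simp
  smul_mem' := by
    intro c a ha y hy
    simp only [Pi.smul_apply, smul_eq_mul, mul_assoc]
    rw [← Finset.mul_sum, ha y hy, mul_zero]

/-- The rank function of the column `q`-polymatroid associated with a code. -/
noncomputable def rhoInt (C : Submodule F (Matrix (Fin n) (Fin n) F))
    (U : Submodule F (Fin n → F)) : ℤ :=
  (finrank F ↥C : ℤ) - (finrank F ↥(C ⊓ colRes (perp U)) : ℤ)

/-- The dual (w.r.t. the trace bilinear form) in `Sym_{n,q}` of a set `D`. -/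
def symDual (D : Set (Matrix (Fin n) (Fin n) F)) :
    Submodule F (Matrix (Fin n) (Fin n) F) where
  carrier := {B | Bᵀ = B ∧ ∀ A ∈ D, Matrix.trace (A * Bᵀ) = 0}
  add_mem' := by
    rintro B B' ⟨hB1, hB2⟩ ⟨hB'1, hB'2⟩
    refine ⟨by rw [Matrix.transpose_add, hB1, hB'1], fun A hA => ?_⟩
    rw [Matrix.transpose_add, Matrix.mul_add, Matrix.trace_add, hB2 A hA, hB'2 A hA,
      add_zero]
  zero_mem' := by simp
  smul_mem' := by
    rintro c B ⟨hB1, hB2⟩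
    refine ⟨by rw [Matrix.transpose_smul, hB1], fun A hA => ?_⟩
    rw [Matrix.transpose_smul, Matrix.mul_smul, Matrix.trace_smul, hB2 A hA, smul_zero]

end Defs

/-! The Frobenius form `(A, B) ↦ tr(A Bᵀ)` is nondegenerate, and pairing with `Eᵢⱼ - Eⱼᵢ` shows
that a matrix orthogonal to every alternating matrix is symmetric. Hence, once `C` contains the
alternating matrices, `C*` is the full Frobenius orthogonal `C^⊥`. Matrices with columns in `U`
have as orthogonal the matrices with columns in `U^⊥`, so `C^⊥ ∩ colRes (U^⊥) = (C + colRes U)^⊥`,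
and both sides of the identity reduce to `n · dim U - dim (C ∩ colRes U)` by the dimension
formulas for orthogonals and for sums of subspaces. -/

open LinearMap (BilinForm)

namespace LinearMap.BilinForm

open Module

variable {R M : Type*} [CommRing R] [AddCommGroup M] [Module R M]

lemma orthogonal_sup (B : BilinForm R M) (N L : Submodule R M) :
    B.orthogonal (N ⊔ L) = B.orthogonal N ⊓ B.orthogonal L := by
  ext x
  have mem_iff : ∀ W : Submodule R M, x ∈ B.orthogonal W ↔ W ≤ LinearMap.ker (B.flip x) :=
    fun _ => Iff.rfl
  simp only [Submodule.mem_inf, mem_iff, sup_le_iff]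

lemma Nondegenerate.finrank_add_finrank_orthogonal {K V : Type*} [Field K] [AddCommGroup V]
    [Module K V] [FiniteDimensional K V] {B : BilinForm K V} (hB : B.Nondegenerate)
    (W : Submodule K V) : finrank K W + finrank K (B.orthogonal W) = finrank K V := by
  have := finrank_add_finrank_orthogonal' (B := B) W
  rwa [Nondegenerate.ker_eq_bot hB, inf_bot_eq, finrank_bot, add_zero] at this

end LinearMap.BilinForm

namespace Matrix

section dotProduct

variable {K m : Type*} [Field K] [Fintype m]

lemma dotProductBilin_isSymm : BilinForm.IsSymm (dotProductBilin K K : BilinForm K (m → K)) :=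
  ⟨dotProduct_comm⟩

lemma dotProductBilin_nondegenerate [DecidableEq m] :
    BilinForm.Nondegenerate (dotProductBilin K K : BilinForm K (m → K)) := by
  refine BilinForm.Nondegenerate.ofSeparatingLeft fun x hx => funext fun i => ?_
  simpa using hx (Pi.single i 1)

end dotProduct

section frobenius

variable {R m n : Type*} [CommRing R] [Fintype m] [Fintype n]

def frobeniusForm : BilinForm R (Matrix m n R) :=
  LinearMap.mk₂ R (fun A B => trace (A * Bᵀ))
    (fun A A' B => by rw [Matrix.add_mul, trace_add])
    (fun c A B => by rw [Matrix.smul_mul, trace_smul])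
    (fun A B B' => by rw [transpose_add, Matrix.mul_add, trace_add])
    (fun c A B => by rw [transpose_smul, Matrix.mul_smul, trace_smul])

lemma frobeniusForm_apply (A B : Matrix m n R) : frobeniusForm A B = trace (A * Bᵀ) := rfl

lemma frobeniusForm_eq_sum_dotProduct (A B : Matrix m n R) :
    frobeniusForm A B = ∑ j, A.col j ⬝ᵥ B.col j := by
  simp only [frobeniusForm_apply, trace, diag, mul_apply, dotProduct, col, transpose_apply]
  exact Finset.sum_comm

lemma frobeniusForm_vecMulVec (x : m → R) (y : n → R) (B : Matrix m n R) :
    frobeniusForm (vecMulVec x y) B = x ⬝ᵥ B *ᵥ y := by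
  rw [frobeniusForm_apply, vecMulVec_mul, vecMul_transpose, trace_vecMulVec]

lemma frobeniusForm_single [DecidableEq m] [DecidableEq n] (i : m) (j : n) (B : Matrix m n R) :
    frobeniusForm (single i j 1) B = B i j := by
  rw [single_eq_single_vecMulVec_single, frobeniusForm_vecMulVec, single_dotProduct,
    mulVec_single_one, one_mul]
  rfl

lemma frobeniusForm_nondegenerate {K : Type*} [Field K] :
    (frobeniusForm : BilinForm K (Matrix m n K)).Nondegenerate := by
  classical
  refine BilinForm.Nondegenerate.ofSeparatingRight fun B hB => ext fun i j => ?_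
  simpa [frobeniusForm_single] using hB (single i j 1)

lemma isSymm_of_frobeniusForm_alternating_eq_zero [DecidableEq m] {B : Matrix m m R}
    (hB : ∀ A : Matrix m m R, (Aᵀ = -A ∧ ∀ i, A i i = 0) → frobeniusForm A B = 0) :
    B.IsSymm := by
  ext i j
  have hA := hB (single i j 1 - single j i 1) ⟨by simp [transpose_single], fun k => ?_⟩
  · rwa [map_sub, LinearMap.sub_apply, frobeniusForm_single, frobeniusForm_single, sub_eq_zero,
      eq_comm] at hA
  · simp [single_apply, and_comm]

end frobenius

end Matrix

section colRes

variable {F : Type*} [Field F] {n : ℕ}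

lemma mem_colRes_iff {U : Submodule F (Fin n → F)} {M : Matrix (Fin n) (Fin n) F} :
    M ∈ colRes U ↔ ∀ j, M.col j ∈ U := by
  refine ⟨fun hM j => ?_, fun hM v => ?_⟩
  · simpa only [mulVec_single_one] using hM (Pi.single j 1)
  · rw [mulVec_eq_sum]
    exact Submodule.sum_mem _ fun j _ => by
      rw [op_smul_eq_smul]
      exact U.smul_mem (v j) (hM j)

lemma colRes_bot : colRes (⊥ : Submodule F (Fin n → F)) = ⊥ := by
  ext M
  simp only [mem_colRes_iff, Submodule.mem_bot]
  exact ⟨fun h => ext fun i j => congrFun (h j) i, fun h j => by subst h; rfl⟩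

def colResEquiv (U : Submodule F (Fin n → F)) : colRes U ≃ₗ[F] (Fin n → U) where
  toFun M j := ⟨(M : Matrix (Fin n) (Fin n) F).col j, mem_colRes_iff.1 M.2 j⟩
  invFun f := ⟨(of fun j => (f j : Fin n → F))ᵀ, mem_colRes_iff.2 fun j => (f j).2⟩
  map_add' _ _ := rfl
  map_smul' _ _ := rfl
  left_inv _ := rfl
  right_inv _ := rfl

lemma finrank_colRes (U : Submodule F (Fin n → F)) :
    finrank F (colRes U) = n * finrank F U := by
  simp [(colResEquiv U).finrank_eq, finrank_pi_fintype]

lemma perp_eq_orthogonal (U : Submodule F (Fin n → F)) :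
    perp U = BilinForm.orthogonal (dotProductBilin F F) U := by
  ext x
  exact forall₂_congr fun y _ => by rw [dotProductBilin_apply_apply, dotProduct_comm]; rfl

lemma perp_perp (U : Submodule F (Fin n → F)) : perp (perp U) = U := by
  rw [perp_eq_orthogonal, perp_eq_orthogonal, BilinForm.orthogonal_orthogonal
    dotProductBilin_nondegenerate dotProductBilin_isSymm.isRefl]

lemma perp_top : perp (⊤ : Submodule F (Fin n → F)) = ⊥ := by
  rw [perp_eq_orthogonal, BilinForm.orthogonal_top_eq_bot dotProductBilin_nondegenerate]

lemma orthogonal_colRes (U : Submodule F (Fin n → F)) :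
    frobeniusForm.orthogonal (colRes U) = colRes (perp U) := by
  ext B
  constructor
  · intro hB v y hy
    have hyv : vecMulVec y v ∈ colRes U := fun w => by
      rw [vecMulVec_mulVec, op_smul_eq_smul]
      exact U.smul_mem _ hy
    have := hB _ hyv
    rwa [frobeniusForm_vecMulVec, dotProduct_comm] at this
  · intro hB A hA
    rw [frobeniusForm_eq_sum_dotProduct]
    refine Finset.sum_eq_zero fun j _ => ?_
    rw [dotProduct_comm]
    exact mem_colRes_iff.1 hB j _ (mem_colRes_iff.1 hA j)

lemma symDual_eq_orthogonal (C : Submodule F (Matrix (Fin n) (Fin n) F))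
    (halt : ∀ M : Matrix (Fin n) (Fin n) F, (Mᵀ = -M ∧ ∀ i, M i i = 0) → M ∈ C) :
    symDual (C : Set (Matrix (Fin n) (Fin n) F)) = frobeniusForm.orthogonal C := by
  ext B
  refine ⟨fun hB => hB.2, fun hB => ⟨?_, hB⟩⟩
  exact isSymm_of_frobeniusForm_alternating_eq_zero fun A hA => hB A (halt A hA)

lemma rhoInt_top (C : Submodule F (Matrix (Fin n) (Fin n) F)) : rhoInt C ⊤ = finrank F C := by
  rw [rhoInt, perp_top, colRes_bot, inf_bot_eq, finrank_bot, Nat.cast_zero, sub_zero]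

lemma rhoInt_perp (C : Submodule F (Matrix (Fin n) (Fin n) F)) (U : Submodule F (Fin n → F)) :
    rhoInt C (perp U) = finrank F C - finrank F ↥(C ⊓ colRes U) := by
  rw [rhoInt, perp_perp]

lemma rhoInt_orthogonal (C : Submodule F (Matrix (Fin n) (Fin n) F))
    (U : Submodule F (Fin n → F)) :
    rhoInt (frobeniusForm.orthogonal C) U = finrank F ↥(C ⊔ colRes U) - finrank F C := by
  have hC := frobeniusForm_nondegenerate.finrank_add_finrank_orthogonal C
  have hCU := frobeniusForm_nondegenerate.finrank_add_finrank_orthogonal (C ⊔ colRes U)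
  rw [rhoInt, ← orthogonal_colRes, ← BilinForm.orthogonal_sup]
  omega

end colRes

theorem dual_polymatroid_eq_polymatroid_of_dual_char_two_general
    {F : Type*} [Field F] {n : ℕ}
    (C : Submodule F (Matrix (Fin n) (Fin n) F))
    (halt : ∀ M : Matrix (Fin n) (Fin n) F, (Mᵀ = -M ∧ ∀ i, M i i = 0) → M ∈ C) :
    ∀ U : Submodule F (Fin n → F),
      (n : ℤ) * finrank F ↥U - rhoInt C ⊤ + rhoInt C (perp U)
        = rhoInt (symDual (C : Set (Matrix (Fin n) (Fin n) F))) U := by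
  intro U
  have hmod := Submodule.finrank_sup_add_finrank_inf_eq C (colRes U)
  rw [finrank_colRes] at hmod
  rw [symDual_eq_orthogonal C halt, rhoInt_top, rhoInt_perp, rhoInt_orthogonal]
  omega

/-- In characteristic `2`, for an `F_q`-linear symmetric code `C` containing
`Alt_{n,q}`, the dual `q`-polymatroid of `M[C]` equals the `q`-polymatroid of the dual
code `C*`: for every `U ≤ F_q^n`, `n·dim U − ρ_C(F_q^n) + ρ_C(U^⊥) = ρ_{C*}(U)`. -/
theorem dual_polymatroid_eq_polymatroid_of_dual_char_two
    {F : Type*} [Field F] [Fintype F] [CharP F 2] {n : ℕ}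
    (C : Submodule F (Matrix (Fin n) (Fin n) F))
    (hsym : ∀ M ∈ C, Mᵀ = M)
    (halt : ∀ M : Matrix (Fin n) (Fin n) F, (Mᵀ = -M ∧ ∀ i, M i i = 0) → M ∈ C) :
    ∀ U : Submodule F (Fin n → F),
      (n : ℤ) * finrank F ↥U - rhoInt C ⊤ + rhoInt C (perp U)
        = rhoInt (symDual (C : Set (Matrix (Fin n) (Fin n) F))) U :=
  dual_polymatroid_eq_polymatroid_of_dual_char_two_general C halt
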